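/- arXiv:math/0603143 — 3 statements merged into one kernel-verified Lean document; each statement's English description precedes it below -/
import Mathlib

section
/- Let N be a positive integer, h and α elements of (1/N)ℤ, and work in the ring ℝ[x₂^{1/N}, x₂^{−1/N}][[x₀]] with the convention that (x₂+x₀)^β = ∑_{j≥0} C(β,j) x₂^{β−j} x₀^j. Then ∑_{i≥0} C(h,i) x₂^{α(h−i)} ((x₂+x₀)^α − x₂^α)^i = (x₂+x₀)^{αh}; that is, substituting z₀ = (x₂+x₀)^α − x₂^α (expanded in powers of x₀) into the binomial expansion of (x₂^α + z₀)^h yields (x₂+x₀)^{αh}. -/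
/-- The generalized binomial coefficient `C(α, m) = α(α−1)⋯(α−m+1)/m!`. -/
noncomputable def qchoose (α : ℚ) (m : ℕ) : ℚ :=
  (∏ i ∈ Finset.range m, (α - i)) / (Nat.factorial m)

/-- The series `x₂^{-β}·(x₂+x₀)^β = ∑_{j≥0} C(β,j) x₂^{−j} x₀^j`, modeled as a power series
in `x₀` with coefficients in `ℝ[x₂^{-1}]`, where `Polynomial.X` plays the role of `x₂^{-1}`. -/
noncomputable def binomialSeriesQ (β : ℚ) : PowerSeries (Polynomial ℝ) :=
  PowerSeries.mk fun j => (qchoose β j : ℝ) • Polynomial.X ^ j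

/-!
Write `B_α = x₂^{-α}(x₂+x₀)^α = (1 + x₀/x₂)^α`. For `h = m ∈ ℕ` the left-hand side is the
binomial expansion of `(1 + (B_α - 1))^m = B_α^m = B_{αm}`. Since `B_α - 1` is divisible by `x₀`,
the coefficient of `x₀ⁿ` of either side is a polynomial in `h` of degree at most `n`; the two
polynomials agree at every natural number, hence everywhere.
-/

open Finset PowerSeries
open scoped Nat

section ChoosePolynomial

variable {K : Type*} [Field K] [CharZero K]

lemma Ring.choose_eq_inv_factorial_mul_eval (a : K) (n : ℕ) :
    Ring.choose a n = (n ! : K)⁻¹ * (descPochhammer K n).eval a := by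
  rw [Ring.choose_eq_smul, smul_eq_mul, ← Polynomial.aeval_eq_smeval, Polynomial.aeval_def,
    Polynomial.eval₂_eq_eval_map, descPochhammer_map]

variable (K) in
noncomputable def choosePolynomial (n : ℕ) : Polynomial K :=
  Polynomial.C (n ! : K)⁻¹ * descPochhammer K n

lemma eval_choosePolynomial (n : ℕ) (a : K) :
    (choosePolynomial K n).eval a = Ring.choose a n := by
  rw [choosePolynomial, Polynomial.eval_mul, Polynomial.eval_C,
    Ring.choose_eq_inv_factorial_mul_eval]

end ChoosePolynomial

lemma Polynomial.eq_of_eval_natCast_eq {R : Type*} [CommRing R] [IsDomain R] [CharZero R]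
    {p q : Polynomial R} (h : ∀ m : ℕ, p.eval (m : R) = q.eval (m : R)) : p = q :=
  eq_of_infinite_eval_eq p q <| (Set.infinite_range_of_injective Nat.cast_injective).mono <| by
    rintro _ ⟨m, rfl⟩
    exact h m

lemma qchoose_eq_choose (α : ℚ) (n : ℕ) : qchoose α n = Ring.choose α n := by
  rw [Ring.choose_eq_inv_factorial_mul_eval, descPochhammer_eval_eq_prod_range, qchoose,
    inv_mul_eq_div]

lemma PowerSeries.coeff_pow_eq_zero_of_lt {R : Type*} [CommSemiring R] {f : R⟦X⟧}
    (hf : constantCoeff f = 0) {n i : ℕ} (h : n < i) : coeff n (f ^ i) = 0 :=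
  X_pow_dvd_iff.mp (pow_dvd_pow_of_dvd (X_dvd_iff.mpr hf) i) n h

lemma PowerSeries.binomialSeries_pow {R A : Type*} [CommRing R] [BinomialRing R] [Ring A]
    [Algebra R A] (α : R) (m : ℕ) : binomialSeries A α ^ m = binomialSeries A (α * m) := by
  induction m with
  | zero => simp
  | succ m ih => rw [pow_succ, ih, ← binomialSeries_add]; push_cast; ring_nf

lemma sum_choose_natCast_mul_coeff_pow_binomialSeries_sub_one {K : Type*} [CommRing K]
    [BinomialRing K] (α : K) (m n : ℕ) :
    ∑ i ∈ range (n + 1), Ring.choose (m : K) i * coeff n ((binomialSeries K α - 1) ^ i) =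
      Ring.choose (α * m) n := by
  set f := binomialSeries K α - 1
  have hf : constantCoeff f = 0 := by simp [f]
  calc ∑ i ∈ range (n + 1), Ring.choose (m : K) i * coeff n (f ^ i)
      = ∑ i ∈ range (n + m + 1), Ring.choose (m : K) i * coeff n (f ^ i) := by
        refine sum_subset (range_subset_range.mpr (by omega)) fun i _ hi => ?_
        rw [coeff_pow_eq_zero_of_lt hf (by simpa using hi), mul_zero]
    _ = ∑ i ∈ range (m + 1), Ring.choose (m : K) i * coeff n (f ^ i) := by
        refine (sum_subset (range_subset_range.mpr (by omega)) fun i _ hi => ?_).symm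
        rw [Ring.choose_natCast, Nat.choose_eq_zero_of_lt (by simpa using hi), Nat.cast_zero,
          zero_mul]
    _ = coeff n ((f + 1) ^ m) := by
        simp only [add_pow, one_pow, one_mul, map_sum, Ring.choose_natCast,
          ← map_natCast (C (R := K)), coeff_mul_C, mul_comm]
    _ = Ring.choose (α * m) n := by simp [f, binomialSeries_pow]

theorem sum_choose_mul_coeff_pow_binomialSeries_sub_one {K : Type*} [Field K] [CharZero K]
    (α h : K) (n : ℕ) :
    ∑ i ∈ range (n + 1), Ring.choose h i * coeff n ((binomialSeries K α - 1) ^ i) =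
      Ring.choose (α * h) n := by
  let P : Polynomial K := ∑ i ∈ range (n + 1),
    Polynomial.C (coeff n ((binomialSeries K α - 1) ^ i)) * choosePolynomial K i
  let Q : Polynomial K := (choosePolynomial K n).comp (Polynomial.C α * Polynomial.X)
  have hP (t : K) : P.eval t =
      ∑ i ∈ range (n + 1), Ring.choose t i * coeff n ((binomialSeries K α - 1) ^ i) := by
    simp [P, Polynomial.eval_finsetSum, eval_choosePolynomial, mul_comm]
  have hQ (t : K) : Q.eval t = Ring.choose (α * t) n := by
    simp [Q, eval_choosePolynomial]
  have hPQ : P = Q := Polynomial.eq_of_eval_natCast_eq fun m => by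
    rw [hP, hQ, sum_choose_natCast_mul_coeff_pow_binomialSeries_sub_one]
  rw [← hP, hPQ, hQ]

/-- The substitution `x₀ ↦ x₂⁻¹ x₀` (recall that `Polynomial.X` stands for `x₂⁻¹`). -/
noncomputable def rescaleByX : ℚ⟦X⟧ →+* (Polynomial ℝ)⟦X⟧ :=
  (rescale Polynomial.X).comp (map (algebraMap ℚ (Polynomial ℝ)))

lemma coeff_rescaleByX (f : ℚ⟦X⟧) (n : ℕ) :
    coeff n (rescaleByX f) = ((coeff n f : ℚ) : ℝ) • (Polynomial.X : Polynomial ℝ) ^ n := by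
  rw [rescaleByX, RingHom.comp_apply, coeff_rescale, coeff_map, Polynomial.smul_eq_C_mul,
    mul_comm]
  rfl

lemma binomialSeriesQ_eq_rescaleByX (β : ℚ) :
    binomialSeriesQ β = rescaleByX (PowerSeries.binomialSeries ℚ β) := by
  ext n
  simp [binomialSeriesQ, coeff_rescaleByX, qchoose_eq_choose]

theorem stmt_2_general (α h : ℚ) (n : ℕ) :
    PowerSeries.coeff (R := Polynomial ℝ) n
        (∑ i ∈ Finset.range (n + 1),
          (qchoose h i : ℝ) • (binomialSeriesQ α - 1) ^ i) =
      PowerSeries.coeff (R := Polynomial ℝ) n (binomialSeriesQ (α * h)) := by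
  calc _ = ∑ i ∈ range (n + 1),
        (qchoose h i : ℝ) • coeff n (rescaleByX ((PowerSeries.binomialSeries ℚ α - 1) ^ i)) := by
        rw [map_sum, binomialSeriesQ_eq_rescaleByX, ← map_one rescaleByX, ← map_sub]
        simp only [← map_pow, coeff_smul]
    _ = ((∑ i ∈ range (n + 1),
            Ring.choose h i * coeff n ((PowerSeries.binomialSeries ℚ α - 1) ^ i) : ℚ) : ℝ) •
          (Polynomial.X : Polynomial ℝ) ^ n := by
        simp only [coeff_rescaleByX, qchoose_eq_choose, smul_smul, sum_smul, Rat.cast_sum,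
          Rat.cast_mul]
    _ = _ := by
        rw [sum_choose_mul_coeff_pow_binomialSeries_sub_one, binomialSeriesQ_eq_rescaleByX,
          coeff_rescaleByX, binomialSeries_coeff, smul_eq_mul, mul_one]

/-- For `h, α ∈ (1/N)ℤ` one has
`∑_{i≥0} C(h,i) x₂^{α(h−i)} ((x₂+x₀)^α − x₂^α)^i = (x₂+x₀)^{αh}`.
After factoring out `x₂^{αh}` this reads
`∑_{i≥0} C(h,i) (x₂^{-α}(x₂+x₀)^α − 1)^i = x₂^{-αh}(x₂+x₀)^{αh}`;
since `x₂^{-α}(x₂+x₀)^α − 1` is divisible by `x₀`, the coefficient of `x₀^n` of the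
left-hand side receives contributions only from `i ≤ n`, and the identity is stated
coefficientwise. -/
theorem stmt_2 (N : ℕ) (hN : 0 < N) (α h : ℚ) (a b : ℤ)
    (hα : α = (a : ℚ) / N) (hh : h = (b : ℚ) / N) (n : ℕ) :
    PowerSeries.coeff (R := Polynomial ℝ) n
        (∑ i ∈ Finset.range (n + 1),
          (qchoose h i : ℝ) • (binomialSeriesQ α - 1) ^ i) =
      PowerSeries.coeff (R := Polynomial ℝ) n (binomialSeriesQ (α * h)) :=
  stmt_2_general α h n
end

section
/- Let k be a positive integer, let p(x₀,x) = x₀^k + x·q(x₀,x) with q a polynomial, let h(x₀,x) be a polynomial, and let α ∈ ℚ. Define z^α|_{z=p, x₀≫x} := ∑_{i≥0} C(α,i) x₀^{k(α−i)} (x q(x₀,x))^i ∈ ℝ[x₀, x₀^{−1}][[x]] (interpreting x₀^{kα} formally via a root of x₀ if needed). Then z^α|_{z = p + x·h, x₀≫x} = ∑_{j≥0} C(α,j) (z₀^{α−j}|_{z₀ = p, x₀≫x}) (x·h(x₀,x))^j; in other words, the substitution z = p + x h into z^α agrees with first expanding (z₀ + x h)^α binomially and then substituting z₀ = p. -/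
open scoped LaurentPolynomial

/-- Embedding of two-variable polynomials `ℝ[x₀][x]` into `ℝ[x₀,x₀⁻¹][[x]]`. -/
noncomputable def toSeries (p : Polynomial (Polynomial ℝ)) :
    PowerSeries (LaurentPolynomial ℝ) :=
  ((p.map Polynomial.toLaurent : Polynomial (LaurentPolynomial ℝ)) :
    PowerSeries (LaurentPolynomial ℝ))

/-- The expansion `x₀^{-kα}·(z^α|_{z = x₀^k + x q, x₀ ≫ x}) = ∑_i C(α,i) x₀^{−ki} (x q)^i`,
an element of `ℝ[x₀,x₀⁻¹][[x]]` (here `LaurentPolynomial.T` plays the role of powers of `x₀`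
and `PowerSeries.X` the role of `x`); since the `i`-th term is divisible by `x^i`, the sum is
defined coefficientwise. -/
noncomputable def subExpansion (k : ℕ) (q : PowerSeries (LaurentPolynomial ℝ)) (α : ℚ) :
    PowerSeries (LaurentPolynomial ℝ) :=
  PowerSeries.mk fun n =>
    PowerSeries.coeff (R := LaurentPolynomial ℝ) n
      (∑ i ∈ Finset.range (n + 1),
        (qchoose α i : ℝ) •
          (PowerSeries.C (R := LaurentPolynomial ℝ) (LaurentPolynomial.T (-(k * i : ℤ))) *
            (PowerSeries.X * q) ^ i))

/-! With `u = x₀^{-k}`, `z = u·x·q` and `v = u·x·h`, both sides are the truncations of the formal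
identity `(1 + z + v)^α = ∑ⱼ C(α,j) (1 + z)^{α-j} vʲ`. The coefficient of `xⁿ` only sees the
monomials `zᵃ vᵇ` with `a + b ≤ n`, and on these the two sides agree by the binomial theorem and
`C(α,b) C(α-b,a) = C(α,a+b) C(a+b,a)`. -/

open PowerSeries Finset

lemma qchoose_mul_qchoose_sub (α : ℚ) (a b : ℕ) :
    qchoose α b * qchoose (α - b) a = qchoose α (a + b) * (a + b).choose a := by
  unfold qchoose
  rw [add_comm a b, prod_range_add, Nat.cast_choose ℚ (Nat.le_add_left a b), Nat.add_sub_cancel]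
  have shift : ∀ i ∈ range a, α - ((b + i : ℕ) : ℚ) = (α - b) - i := by
    intro i _; push_cast; ring
  rw [prod_congr rfl shift]
  have ha : (a.factorial : ℚ) ≠ 0 := Nat.cast_ne_zero.2 a.factorial_ne_zero
  have hb : (b.factorial : ℚ) ≠ 0 := Nat.cast_ne_zero.2 b.factorial_ne_zero
  have hab : ((b + a).factorial : ℚ) ≠ 0 := Nat.cast_ne_zero.2 (b + a).factorial_ne_zero
  field_simp

section BinomialSums

variable {K R : Type*} [Field K] [CharZero K] [CommRing R] [Algebra K R]

lemma sum_qchoose_smul_add_pow (α : ℚ) (z v : R) (n : ℕ) :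
    ∑ i ∈ range (n + 1), (qchoose α i : K) • (z + v) ^ i =
      ∑ a ∈ range (n + 1), ∑ b ∈ range (n + 1 - a),
        ((qchoose α (a + b) * (a + b).choose a : ℚ) : K) • (z ^ a * v ^ b) := by
  rw [← sum_range_diag_flip]
  refine sum_congr rfl fun i _ => ?_
  rw [add_pow, smul_sum]
  refine sum_congr rfl fun a ha => ?_
  rw [Nat.add_sub_cancel' (Nat.lt_succ_iff.mp (mem_range.mp ha))]
  simp only [Algebra.smul_def, Rat.cast_mul, Rat.cast_natCast, map_mul, map_natCast]
  ring

lemma qchoose_smul_sum_mul_pow (α : ℚ) (z v : R) (b n : ℕ) :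
    (qchoose α b : K) • ((∑ a ∈ range n, (qchoose (α - b) a : K) • z ^ a) * v ^ b) =
      ∑ a ∈ range n, ((qchoose α (a + b) * (a + b).choose a : ℚ) : K) • (z ^ a * v ^ b) := by
  rw [sum_mul, smul_sum]
  refine sum_congr rfl fun a _ => ?_
  rw [← qchoose_mul_qchoose_sub, Rat.cast_mul, mul_smul, smul_mul_assoc]

end BinomialSums

lemma PowerSeries.coeff_mul_eq_of_coeff_eq {R : Type*} [Semiring R] {f g : R⟦X⟧} (φ : R⟦X⟧)
    {n : ℕ} (h : ∀ m ≤ n, coeff m f = coeff m g) : coeff n (f * φ) = coeff n (g * φ) := by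
  rw [coeff_mul, coeff_mul]
  refine sum_congr rfl fun p hp => ?_
  rw [HasAntidiagonal.mem_antidiagonal] at hp
  rw [h p.1 (by omega)]

lemma PowerSeries.coeff_pow_mul_pow_of_lt {R : Type*} [CommSemiring R] {z v : R⟦X⟧}
    (hz : X ∣ z) (hv : X ∣ v) {a b n : ℕ} (h : n < a + b) : coeff n (z ^ a * v ^ b) = 0 := by
  refine X_pow_dvd_iff.mp ?_ n h
  rw [pow_add]
  exact mul_dvd_mul (pow_dvd_pow_of_dvd hz a) (pow_dvd_pow_of_dvd hv b)

section BinomialExpansion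

variable (K : Type*) {A : Type*} [Field K] [CommRing A] [Algebra K A]

/-- The formal expansion `∑ᵢ C(α,i) zⁱ` of `(1 + z)^α`, meaningful when `X ∣ z`. -/
noncomputable def binomialExpansion (α : ℚ) (z : A⟦X⟧) : A⟦X⟧ :=
  mk fun n => coeff n (∑ i ∈ range (n + 1), (qchoose α i : K) • z ^ i)

variable {K}

lemma coeff_binomialExpansion_of_le (α : ℚ) {z : A⟦X⟧} (hz : X ∣ z) {m N : ℕ} (h : m ≤ N) :
    coeff m (binomialExpansion K α z) = coeff m (∑ i ∈ range (N + 1), (qchoose α i : K) • z ^ i) := by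
  rw [binomialExpansion, coeff_mk, map_sum, map_sum]
  refine sum_subset (range_subset_range.2 (by omega)) fun i hi hmi => ?_
  rw [coeff_smul, X_pow_dvd_iff.mp (pow_dvd_pow_of_dvd hz i) m (by simp at hi hmi; omega),
    smul_zero]

theorem binomialExpansion_add [CharZero K] (α : ℚ) {z v : A⟦X⟧} (hz : X ∣ z) (hv : X ∣ v) :
    binomialExpansion K α (z + v) = mk fun n => coeff n
      (∑ j ∈ range (n + 1), (qchoose α j : K) • (binomialExpansion K (α - j) z * v ^ j)) := by
  ext n
  set t : ℕ → ℕ → A := fun a b =>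
    coeff n (((qchoose α (a + b) * (a + b).choose a : ℚ) : K) • (z ^ a * v ^ b))
  have lhs : coeff n (binomialExpansion K α (z + v)) =
      ∑ a ∈ range (n + 1), ∑ b ∈ range (n + 1 - a), t a b := by
    simp only [binomialExpansion, coeff_mk, sum_qchoose_smul_add_pow, map_sum, t]
  have rhs : coeff n (∑ j ∈ range (n + 1),
      (qchoose α j : K) • (binomialExpansion K (α - j) z * v ^ j)) =
      ∑ b ∈ range (n + 1), ∑ a ∈ range (n + 1), t a b := by
    rw [map_sum]
    refine sum_congr rfl fun b _ => ?_
    rw [coeff_smul, coeff_mul_eq_of_coeff_eq _ fun m hm => coeff_binomialExpansion_of_le _ hz hm,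
      ← coeff_smul, qchoose_smul_sum_mul_pow, map_sum]
  rw [coeff_mk, lhs, rhs, sum_comm]
  refine sum_congr rfl fun a ha => sum_subset (range_subset_range.2 (by omega)) fun b hb hab => ?_
  simp only [mem_range] at ha hb hab
  simp only [t, coeff_smul, coeff_pow_mul_pow_of_lt hz hv (show n < a + b by omega), smul_zero]

end BinomialExpansion

lemma C_T_neg_mul_eq_pow (k i : ℕ) :
    (C (LaurentPolynomial.T (-(k * i : ℤ))) : (LaurentPolynomial ℝ)⟦X⟧) =
      C (LaurentPolynomial.T (-k)) ^ i := by
  rw [← map_pow, LaurentPolynomial.T_pow]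
  congr 2
  ring

lemma subExpansion_eq_binomialExpansion (k : ℕ) (Q : (LaurentPolynomial ℝ)⟦X⟧) (α : ℚ) :
    subExpansion k Q α = binomialExpansion ℝ α (C (LaurentPolynomial.T (-k)) * (X * Q)) := by
  simp only [subExpansion, binomialExpansion, C_T_neg_mul_eq_pow, mul_pow]

theorem subExpansion_add (k : ℕ) (Q H : (LaurentPolynomial ℝ)⟦X⟧) (α : ℚ) :
    subExpansion k (Q + H) α = mk fun n => coeff n
      (∑ j ∈ range (n + 1), (qchoose α j : ℝ) •
        (C (LaurentPolynomial.T (-(k * j : ℤ))) * subExpansion k Q (α - j) * (X * H) ^ j)) := by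
  have hX : ∀ φ : (LaurentPolynomial ℝ)⟦X⟧, X ∣ C (LaurentPolynomial.T (-k)) * (X * φ) :=
    fun φ => Dvd.intro (C (LaurentPolynomial.T (-k)) * φ) (by ring)
  rw [subExpansion_eq_binomialExpansion, mul_add X Q H, mul_add,
    binomialExpansion_add α (hX Q) (hX H)]
  refine congrArg mk (funext fun n => congrArg (coeff n) (sum_congr rfl fun j _ => ?_))
  rw [subExpansion_eq_binomialExpansion, C_T_neg_mul_eq_pow]
  exact congrArg _ (by ring)

theorem stmt_3_general (k : ℕ) (q h : Polynomial (Polynomial ℝ)) (α : ℚ) :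
    subExpansion k (toSeries q + toSeries h) α =
      PowerSeries.mk fun n =>
        PowerSeries.coeff (R := LaurentPolynomial ℝ) n
          (∑ j ∈ Finset.range (n + 1),
            (qchoose α j : ℝ) •
              (PowerSeries.C (R := LaurentPolynomial ℝ) (LaurentPolynomial.T (-(k * j : ℤ))) *
                subExpansion k (toSeries q) (α - j) *
                (PowerSeries.X * toSeries h) ^ j)) :=
  subExpansion_add k (toSeries q) (toSeries h) α

/-- For `p(x₀,x) = x₀^k + x·q(x₀,x)` (`k ≥ 1`), a polynomial `h(x₀,x)` and `α ∈ ℚ`,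
`z^α|_{z = p + x·h, x₀ ≫ x} = ∑_{j≥0} C(α,j) (z₀^{α−j}|_{z₀ = p, x₀ ≫ x}) (x·h)^j`:
after factoring out the formal power `x₀^{kα}` from both sides, the substitution of
`z = p + x h` into `z^α` agrees with first expanding `(z₀ + x h)^α` binomially and then
substituting `z₀ = p`.  The right-hand infinite sum over `j` is again defined
coefficientwise (its `j`-th term is divisible by `x^j`). -/
theorem stmt_3 (k : ℕ) (hk : 1 ≤ k) (q h : Polynomial (Polynomial ℝ)) (α : ℚ) :
    subExpansion k (toSeries q + toSeries h) α =
      PowerSeries.mk fun n =>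
        PowerSeries.coeff (R := LaurentPolynomial ℝ) n
          (∑ j ∈ Finset.range (n + 1),
            (qchoose α j : ℝ) •
              (PowerSeries.C (R := LaurentPolynomial ℝ) (LaurentPolynomial.T (-(k * j : ℤ))) *
                subExpansion k (toSeries q) (α - j) *
                (PowerSeries.X * toSeries h) ^ j)) :=
  stmt_3_general k q h α
end

section
/- Let V be a ℤ-graded vector space with operators L(0), L(n) (n≥1) as above, N a positive integer, a_n ∈ ℂ scalars, and define Δ_N(x) = exp(∑_{n≥1} a_n x^{−n/N} L(n)) N^{−L(0)} x^{(1/N−1)L(0)} ∈ Hom(V, V[x^{1/N}, x^{−1/N}]). Then Δ_N(x^N)^{−1} = (N x^{N−1})^{L(0)} exp(−∑_{n≥1} a_n x^{−n} L(n)); i.e., the inverse of Δ_N evaluated at x^N is given by this closed formula. -/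
section

variable {V : Type*} [AddCommGroup V] [Module ℂ V]

/-- The coefficient of `x^{−m}` in `exp(∑_{n≥1} b_n x^{−n} L(n))`:
`∑_k (1/k!) ∑_{n_1+⋯+n_k=m, n_i≥1} b_{n_1}⋯b_{n_k} L(n_1)∘⋯∘L(n_k)`,
a finite sum over compositions of `m`. -/
noncomputable def expCoeff (b : ℕ → ℂ) (L : ℕ → Module.End ℂ V) (m : ℕ) :
    Module.End ℂ V :=
  ∑ c : Composition m,
    (((c.blocks.map b).prod) / (c.length.factorial : ℂ)) • (c.blocks.map L).prod

/-- The coefficient of `x^j` in `Φ(x) = (N x^{N−1})^{L(0)} exp(−∑_{n≥1} a_n x^{−n} L(n))`. -/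
noncomputable def phiCoeff (π : ℤ → Module.End ℂ V) (L : ℕ → Module.End ℂ V)
    (a : ℕ → ℂ) (N : ℕ) (j : ℤ) (v : V) : V :=
  ∑ᶠ p : ℕ × ℤ,
    if ((N : ℤ) - 1) * p.2 - (N : ℤ) * p.1 = j then
      ((N : ℂ) ^ (p.2 - (p.1 : ℤ))) • (expCoeff (fun n => -a n) L p.1) (π p.2 v)
    else 0

/-- The coefficient of `x^j` in
`Δ_N(x^N) = exp(∑_{n≥1} a_n x^{−n} L(n)) N^{−L(0)} x^{(1−N)L(0)}`:
a homogeneous `v` of degree `d` is first multiplied by `N^{−d} x^{(1−N)d}` and then the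
exponential contributes `∑_m x^{−m} E_m`, for a total power `x^{(1−N)d − m}`. -/
noncomputable def deltaNCoeff (π : ℤ → Module.End ℂ V) (L : ℕ → Module.End ℂ V)
    (a : ℕ → ℂ) (N : ℕ) (j : ℤ) (v : V) : V :=
  ∑ᶠ p : ℕ × ℤ,
    if (1 - (N : ℤ)) * p.2 - (p.1 : ℤ) = j then
      ((N : ℂ) ^ (-p.2)) • (expCoeff a L p.1) (π p.2 v)
    else 0

end

/-!
Both `Δ_N(x^N)` and `Φ(x)` are series `∑ c(m,d) x^{σ(m,d)} E_m π_d` in which `E_m`, the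
`x^{-m}`-coefficient of an exponential, lowers degrees by `m`. In a product of two such series
each homogeneous summand of the inner factor meets exactly one coefficient of the outer one, and
the scalings `N^{∓L(0)}` and `x^{±(N-1)L(0)}` cancel once the degree shift by `m` is accounted
for. What remains in front of `x^{-M}` (for `Δ_N(x^N) Φ(x)`) or `x^{-NM}` (for `Φ(x) Δ_N(x^N)`)
is `∑_{k ≤ M} E_{M-k}(b) E_k(-b)`, which is `δ_{M,0}`: cutting a composition of `M` with `K`
parts after its `i`-th part produces the alternating sum `∑_i (-1)^{K-i}/(i!(K-i)!) = (1-1)^K/K!`.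
-/

open Finset Function
open scoped Nat

def compositionLists (m : ℕ) : Finset (List ℕ) :=
  (univ : Finset (Composition m)).image Composition.blocks

lemma mem_compositionLists {m : ℕ} {l : List ℕ} :
    l ∈ compositionLists m ↔ l.sum = m ∧ ∀ i ∈ l, 0 < i := by
  simp only [compositionLists, mem_image, mem_univ, true_and]
  constructor
  · rintro ⟨c, rfl⟩
    exact ⟨c.blocks_sum, fun _ => c.blocks_pos⟩
  · rintro ⟨hsum, hpos⟩
    exact ⟨⟨l, hpos _, hsum⟩, rfl⟩

lemma compositionLists_zero : compositionLists 0 = {[]} := by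
  ext l
  simp only [mem_compositionLists, List.sum_eq_zero_iff, mem_singleton]
  constructor
  · rintro ⟨hzero, hpos⟩
    exact List.eq_nil_iff_forall_not_mem.2 fun i hi => (hpos i hi).ne' (hzero i hi)
  · rintro rfl
    simp

/-- Splitting a composition of `m` into a prefix and a suffix is a bijection onto pairs of
compositions of `m - k` and `k`. -/
lemma sum_range_sum_compositionLists_product {M : Type*} [AddCommMonoid M] (m : ℕ)
    (g : List ℕ × List ℕ → M) :
    ∑ k ∈ range (m + 1), ∑ x ∈ compositionLists (m - k) ×ˢ compositionLists k, g x =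
      ∑ l ∈ compositionLists m, ∑ i ∈ range (l.length + 1), g (l.take i, l.drop i) := by
  rw [sum_sigma', sum_sigma']
  refine sum_nbij' (fun x => ⟨x.2.1 ++ x.2.2, x.2.1.length⟩)
    (fun y => ⟨(y.1.drop y.2).sum, y.1.take y.2, y.1.drop y.2⟩) ?_ ?_ ?_ ?_ ?_
  · rintro ⟨k, l₁, l₂⟩ h
    simp only [mem_sigma, mem_range, mem_product, mem_compositionLists] at h ⊢
    refine ⟨⟨by simp; omega, fun i hi => ?_⟩, by simp⟩
    rcases List.mem_append.1 hi with hi | hi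
    exacts [h.2.1.2 i hi, h.2.2.2 i hi]
  · rintro ⟨l, i⟩ h
    simp only [mem_sigma, mem_range, mem_product, mem_compositionLists] at h ⊢
    have hsplit := congrArg List.sum (List.take_append_drop i l)
    rw [List.sum_append] at hsplit
    refine ⟨by omega, ⟨by omega, fun j hj => h.1.2 j (List.mem_of_mem_take hj)⟩,
      trivial, fun j hj => h.1.2 j (List.mem_of_mem_drop hj)⟩
  · rintro ⟨k, l₁, l₂⟩ h
    simp only [mem_sigma, mem_range, mem_product, mem_compositionLists] at h
    simp [h.2.2.1]
  · rintro ⟨l, i⟩ h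
    simp only [mem_sigma, mem_range] at h
    simp only [List.take_append_drop, List.length_take, Sigma.mk.injEq, heq_eq_eq, true_and]
    omega
  · rintro ⟨k, l₁, l₂⟩ -
    simp

lemma sum_range_neg_one_pow_div_factorial_mul_factorial {K : ℕ} (hK : K ≠ 0) :
    ∑ i ∈ range (K + 1), (-1 : ℂ) ^ (K - i) / (i ! * (K - i)! : ℂ) = 0 := by
  have hbinom := add_pow (1 : ℂ) (-1) K
  rw [add_neg_cancel, zero_pow hK] at hbinom
  have hterm : ∀ i ∈ range (K + 1), (-1 : ℂ) ^ (K - i) / (i ! * (K - i)! : ℂ) =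
      1 ^ i * (-1) ^ (K - i) * (K.choose i : ℂ) / K ! := by
    intro i hi
    have hK : (K ! : ℂ) ≠ 0 := Nat.cast_ne_zero.2 K.factorial_ne_zero
    rw [Nat.cast_choose ℂ (Nat.lt_succ_iff.mp (mem_range.mp hi)), one_pow, one_mul]
    field_simp
  rw [sum_congr rfl hterm, ← sum_div, ← hbinom, zero_div]

section ExpCoeff

variable {V : Type*} [AddCommGroup V] [Module ℂ V]

lemma expCoeff_eq_sum_compositionLists (b : ℕ → ℂ) (L : ℕ → Module.End ℂ V) (m : ℕ) :
    expCoeff b L m = ∑ l ∈ compositionLists m,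
      ((l.map b).prod / (l.length ! : ℂ)) • (l.map L).prod := by
  rw [compositionLists, sum_image fun c _ c' _ h => Composition.ext h]
  rfl

lemma expCoeff_zero (b : ℕ → ℂ) (L : ℕ → Module.End ℂ V) : expCoeff b L 0 = 1 := by
  simp [expCoeff_eq_sum_compositionLists, compositionLists_zero]

/-- The coefficientwise form of `exp(B) exp(-B) = 1`. -/
theorem sum_range_expCoeff_mul_expCoeff_neg (b : ℕ → ℂ) (L : ℕ → Module.End ℂ V) (m : ℕ) :
    ∑ k ∈ range (m + 1), expCoeff b L (m - k) * expCoeff (fun n => -b n) L k =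
      if m = 0 then 1 else 0 := by
  rcases eq_or_ne m 0 with rfl | hm
  · simp [expCoeff_zero]
  simp only [if_neg hm, expCoeff_eq_sum_compositionLists, sum_mul_sum, ← sum_product']
  rw [sum_range_sum_compositionLists_product]
  refine sum_eq_zero fun l hl => ?_
  have hlen : l.length ≠ 0 := by
    intro h
    rw [List.length_eq_zero_iff.1 h, mem_compositionLists] at hl
    exact hm hl.1.symm
  calc _ = ∑ i ∈ range (l.length + 1),
        ((-1 : ℂ) ^ (l.length - i) / (i ! * (l.length - i)! : ℂ)) •
          ((l.map b).prod • (l.map L).prod) := by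
        refine sum_congr rfl fun i hi => ?_
        have hi : i ≤ l.length := Nat.lt_succ_iff.mp (mem_range.mp hi)
        have hneg : ((l.drop i).map fun n => -b n).prod =
            (-1) ^ (l.length - i) * ((l.drop i).map b).prod := by
          have h := List.prod_map_neg ((l.drop i).map b)
          rwa [List.map_map, List.length_map, List.length_drop] at h
        dsimp only
        rw [smul_mul_smul_comm, ← List.prod_append, ← List.map_append, List.take_append_drop,
          smul_smul, hneg, List.length_take_of_le hi, List.length_drop,
          ← List.prod_take_mul_prod_drop (l.map b) i, List.map_take, List.map_drop]
        congr 1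
        ring
    _ = 0 := by
        rw [← sum_smul, sum_range_neg_one_pow_div_factorial_mul_factorial hlen, zero_smul]

end ExpCoeff

section GradedSeries

variable {V : Type*} [AddCommGroup V] [Module ℂ V] (π : ℤ → Module.End ℂ V)

lemma proj_apply_eq_zero_of_ne (hortho : ∀ d e, d ≠ e → π d * π e = 0) {e f : ℤ} {u : V}
    (hu : π e u = u) (hfe : f ≠ e) : π f u = 0 := by
  rw [← hu, ← Module.End.mul_apply, hortho f e hfe, LinearMap.zero_apply]

lemma proj_sub_apply_prod_map (L : ℕ → Module.End ℂ V)
    (hL : ∀ n : ℕ, 1 ≤ n → ∀ (d : ℤ) (v : V), π (d - (n : ℤ)) (L n (π d v)) = L n (π d v))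
    {l : List ℕ} (hl : ∀ n ∈ l, 0 < n) {d : ℤ} {u : V} (hu : π d u = u) :
    π (d - l.sum) ((l.map L).prod u) = (l.map L).prod u := by
  induction l with
  | nil => simpa using hu
  | cons n t ih =>
    have ht := ih fun k hk => hl k (List.mem_cons_of_mem n hk)
    have hn := hL n (hl n List.mem_cons_self) (d - t.sum) ((t.map L).prod u)
    rw [ht] at hn
    simpa [sub_sub, add_comm] using hn

lemma proj_sub_apply_expCoeff (L : ℕ → Module.End ℂ V)
    (hL : ∀ n : ℕ, 1 ≤ n → ∀ (d : ℤ) (v : V), π (d - (n : ℤ)) (L n (π d v)) = L n (π d v))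
    (b : ℕ → ℂ) (m : ℕ) {d : ℤ} {u : V} (hu : π d u = u) :
    π (d - m) (expCoeff b L m u) = expCoeff b L m u := by
  simp only [expCoeff_eq_sum_compositionLists, LinearMap.sum_apply, LinearMap.smul_apply,
    map_sum, map_smul]
  refine sum_congr rfl fun l hl => ?_
  obtain ⟨hsum, hpos⟩ := mem_compositionLists.1 hl
  rw [← hsum, proj_sub_apply_prod_map π L hL hpos hu]

/-- The coefficient of `x^k` in `∑_{m,d} c m d x^{σ m d} A m π_d`; both `Δ_N(x^N)` and `Φ(x)`
have this shape. -/
noncomputable def gradedSeriesCoeff (σ : ℕ → ℤ → ℤ) (c : ℕ → ℤ → ℂ)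
    (A : ℕ → Module.End ℂ V) (k : ℤ) (v : V) : V :=
  ∑ᶠ p : ℕ × ℤ, if σ p.1 p.2 = k then c p.1 p.2 • A p.1 (π p.2 v) else 0

variable {π} {σ : ℕ → ℤ → ℤ} {c : ℕ → ℤ → ℂ} {A : ℕ → Module.End ℂ V}

lemma gradedSeriesCoeff_eq_sum {v : V} {Q : Finset (ℕ × ℤ)}
    (hQ : ∀ q ∉ Q, A q.1 (π q.2 v) = 0) (k : ℤ) :
    gradedSeriesCoeff π σ c A k v =
      ∑ q ∈ Q, if σ q.1 q.2 = k then c q.1 q.2 • A q.1 (π q.2 v) else 0 := by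
  refine finsum_eq_sum_of_support_subset _ fun q hq => ?_
  by_contra hqQ
  simp [hQ q hqQ] at hq

lemma gradedSeriesCoeff_add (hA : ∀ v : V, {p : ℕ × ℤ | A p.1 (π p.2 v) ≠ 0}.Finite)
    (k : ℤ) (u w : V) :
    gradedSeriesCoeff π σ c A k (u + w) =
      gradedSeriesCoeff π σ c A k u + gradedSeriesCoeff π σ c A k w := by
  classical
  set Q := (hA u).toFinset ∪ (hA w).toFinset ∪ (hA (u + w)).toFinset
  have hQ : ∀ v ∈ ({u, w, u + w} : Set V), ∀ q ∉ Q, A q.1 (π q.2 v) = 0 := by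
    rintro v hv q hq
    simp only [Q, mem_union, Set.Finite.mem_toFinset, Set.mem_ofPred_eq, not_or, not_not] at hq
    rcases hv with rfl | rfl | rfl
    exacts [hq.1.1, hq.1.2, hq.2]
  rw [gradedSeriesCoeff_eq_sum (hQ _ (by simp)), gradedSeriesCoeff_eq_sum (hQ u (by simp)),
    gradedSeriesCoeff_eq_sum (hQ w (by simp)), ← sum_add_distrib]
  refine sum_congr rfl fun q _ => ?_
  split_ifs <;> simp [smul_add]

/-- Each summand `q` of the inner series contributes to exactly one coefficient, so the outer
`finsum` collapses. -/
lemma finsum_apply_gradedSeriesCoeff_sub {W : Type*} [AddCommMonoid W] (T : ℤ → V →+ W)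
    {v : V} {Q : Finset (ℕ × ℤ)} (hQ : ∀ q ∉ Q, A q.1 (π q.2 v) = 0) (j : ℤ) :
    ∑ᶠ i, T i (gradedSeriesCoeff π σ c A (j - i) v) =
      ∑ q ∈ Q, T (j - σ q.1 q.2) (c q.1 q.2 • A q.1 (π q.2 v)) := by
  classical
  have hterm : ∀ i (q : ℕ × ℤ), T i (if σ q.1 q.2 = j - i then c q.1 q.2 • A q.1 (π q.2 v)
      else 0) = if j - σ q.1 q.2 = i then T i (c q.1 q.2 • A q.1 (π q.2 v)) else 0 := by
    intro i q
    rw [apply_ite (T i), map_zero]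
    exact if_congr (by omega) rfl rfl
  simp only [gradedSeriesCoeff_eq_sum hQ, map_sum, hterm]
  rw [finsum_eq_sum_of_support_subset _ (s := Q.image fun q => j - σ q.1 q.2), sum_comm]
  · refine sum_congr rfl fun q hq => ?_
    rw [sum_ite_eq, if_pos (mem_image_of_mem _ hq)]
  · intro i hi
    obtain ⟨q, hq, hqi⟩ := exists_ne_zero_of_sum_ne_zero hi
    rw [ite_ne_right_iff] at hqi
    rw [mem_coe, ← hqi.1]
    exact mem_image_of_mem (fun q : ℕ × ℤ => j - σ q.1 q.2) hq

lemma gradedSeriesCoeff_apply_of_proj_eq (hortho : ∀ d e, d ≠ e → π d * π e = 0) {e : ℤ}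
    (hσ : Injective fun m => σ m e) {u : V} (hu : π e u = u) (m : ℕ) :
    gradedSeriesCoeff π σ c A (σ m e) u = c m e • A m u := by
  rw [gradedSeriesCoeff, finsum_eq_single _ (m, e), if_pos rfl, hu]
  rintro ⟨m', d⟩ hne
  rcases eq_or_ne d e with rfl | hde
  · exact if_neg fun h => hne (by rw [show m' = m from hσ h])
  · simp [proj_apply_eq_zero_of_ne π hortho hu hde]

lemma gradedSeriesCoeff_apply_eq_zero (hortho : ∀ d e, d ≠ e → π d * π e = 0) {e k : ℤ}
    (hk : ∀ m, σ m e ≠ k) {u : V} (hu : π e u = u) :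
    gradedSeriesCoeff π σ c A k u = 0 := by
  refine finsum_eq_zero_of_forall_eq_zero fun ⟨m, d⟩ => ?_
  rcases eq_or_ne d e with rfl | hde
  · exact if_neg (hk m)
  · simp [proj_apply_eq_zero_of_ne π hortho hu hde]

end GradedSeries

section InverseFormula

variable {V : Type*} [AddCommGroup V] [Module ℂ V] {π : ℤ → Module.End ℂ V}
  {L : ℕ → Module.End ℂ V} {a : ℕ → ℂ} {N : ℕ}

lemma deltaNCoeff_eq_gradedSeriesCoeff :
    deltaNCoeff π L a N = gradedSeriesCoeff π (fun m d => (1 - N) * d - m)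
      (fun _ d => (N : ℂ) ^ (-d)) (expCoeff a L) := rfl

lemma phiCoeff_eq_gradedSeriesCoeff :
    phiCoeff π L a N = gradedSeriesCoeff π (fun m d => (N - 1) * d - N * m)
      (fun m d => (N : ℂ) ^ (d - m)) (expCoeff (fun n => -a n) L) := rfl

lemma proj_sub_apply_smul_expCoeff (hproj : ∀ d, π d * π d = π d)
    (hL : ∀ n : ℕ, 1 ≤ n → ∀ (d : ℤ) (v : V), π (d - (n : ℤ)) (L n (π d v)) = L n (π d v))
    (c : ℂ) (b : ℕ → ℂ) (m : ℕ) (d : ℤ) (v : V) :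
    π (d - m) (c • expCoeff b L m (π d v)) = c • expCoeff b L m (π d v) := by
  rw [map_smul, proj_sub_apply_expCoeff π L hL b m (by rw [← Module.End.mul_apply, hproj])]

lemma sum_ite_le_apply_proj (hfin : ∀ v : V, (support fun d => π d v).Finite)
    (hsum : ∀ v : V, ∑ᶠ d, π d v = v) {A B : ℕ → Module.End ℂ V} {v : V}
    {Q : Finset (ℕ × ℤ)} (hQ : ∀ q ∉ Q, A q.1 (π q.2 v) = 0) {M : ℕ}
    (hconv : ∑ k ∈ range (M + 1), B (M - k) * A k = if M = 0 then 1 else 0) :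
    ∑ q ∈ Q, (if q.1 ≤ M then B (M - q.1) (A q.1 (π q.2 v)) else 0) =
      if M = 0 then v else 0 := by
  set f : ℕ × ℤ → V := fun q => if q.1 ≤ M then B (M - q.1) (A q.1 (π q.2 v)) else 0
  set D := (hfin v).toFinset
  have hQf : support f ⊆ Q := fun q hq => by
    by_contra hqQ
    simp [f, hQ q hqQ] at hq
  have hDf : support f ⊆ ↑(range (M + 1) ×ˢ D) := fun q hq => by
    by_contra hqD
    simp only [coe_product, Set.mem_prod, mem_coe, mem_range, D, Set.Finite.mem_toFinset,
      mem_support, not_and_or, not_lt, not_not] at hqD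
    rcases hqD with hM | hd
    · simp [f, show ¬q.1 ≤ M by omega] at hq
    · simp [f, hd] at hq
  calc ∑ q ∈ Q, f q = ∑ᶠ q, f q := (finsum_eq_sum_of_support_subset f hQf).symm
    _ = ∑ q ∈ range (M + 1) ×ˢ D, f q := finsum_eq_sum_of_support_subset f hDf
    _ = ∑ d ∈ D, (∑ k ∈ range (M + 1), B (M - k) * A k) (π d v) := by
      rw [sum_product, sum_comm]
      refine sum_congr rfl fun d _ => ?_
      rw [LinearMap.sum_apply]
      exact sum_congr rfl fun k hk => if_pos (Nat.lt_succ_iff.mp (mem_range.mp hk))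
    _ = if M = 0 then v else 0 := by
      rw [hconv]
      split_ifs
      · simp only [Module.End.one_apply]
        conv_rhs => rw [← hsum v, finsum_eq_sum _ (hfin v)]
      · simp

lemma deltaNCoeff_apply_smul_expCoeff_neg (hproj : ∀ d, π d * π d = π d)
    (hortho : ∀ d e, d ≠ e → π d * π e = 0)
    (hL : ∀ n : ℕ, 1 ≤ n → ∀ (d : ℤ) (v : V), π (d - (n : ℤ)) (L n (π d v)) = L n (π d v))
    (hN : N ≠ 0) (m m' : ℕ) (d : ℤ) (v : V) :
    deltaNCoeff π L a N (-(m + m' : ℤ) - ((N - 1) * d - N * m))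
        ((N : ℂ) ^ (d - m) • expCoeff (fun n => -a n) L m (π d v)) =
      expCoeff a L m' (expCoeff (fun n => -a n) L m (π d v)) := by
  have hσ : Injective fun k : ℕ => (1 - (N : ℤ)) * (d - m) - k := fun _ _ h => by
    simpa using h
  rw [deltaNCoeff_eq_gradedSeriesCoeff,
    show -(m + m' : ℤ) - ((N - 1) * d - N * m) = (1 - N) * (d - m) - m' by ring,
    gradedSeriesCoeff_apply_of_proj_eq hortho hσ (proj_sub_apply_smul_expCoeff hproj hL ..),
    map_smul, smul_smul, ← zpow_add₀ (Nat.cast_ne_zero.2 hN), neg_add_cancel, zpow_zero,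
    one_smul]

lemma deltaNCoeff_apply_smul_expCoeff_neg_eq_zero (hproj : ∀ d, π d * π d = π d)
    (hortho : ∀ d e, d ≠ e → π d * π e = 0)
    (hL : ∀ n : ℕ, 1 ≤ n → ∀ (d : ℤ) (v : V), π (d - (n : ℤ)) (L n (π d v)) = L n (π d v))
    {j : ℤ} {m : ℕ} (hj : 0 < j + m) (d : ℤ) (v : V) :
    deltaNCoeff π L a N (j - ((N - 1) * d - N * m))
      ((N : ℂ) ^ (d - m) • expCoeff (fun n => -a n) L m (π d v)) = 0 := by
  rw [deltaNCoeff_eq_gradedSeriesCoeff]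
  exact gradedSeriesCoeff_apply_eq_zero hortho (fun m' h => by linarith)
    (proj_sub_apply_smul_expCoeff hproj hL ..)

lemma phiCoeff_apply_smul_expCoeff (hproj : ∀ d, π d * π d = π d)
    (hortho : ∀ d e, d ≠ e → π d * π e = 0)
    (hL : ∀ n : ℕ, 1 ≤ n → ∀ (d : ℤ) (v : V), π (d - (n : ℤ)) (L n (π d v)) = L n (π d v))
    (hN : N ≠ 0) (m m' : ℕ) (d : ℤ) (v : V) :
    phiCoeff π L a N (-(N * (m + m') : ℤ) - ((1 - N) * d - m))
        ((N : ℂ) ^ (-d) • expCoeff a L m (π d v)) =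
      (N : ℂ) ^ (-(m + m' : ℤ)) • expCoeff (fun n => -a n) L m' (expCoeff a L m (π d v)) := by
  have hσ : Injective fun k : ℕ => ((N : ℤ) - 1) * (d - m) - N * k := fun _ _ h => by
    simpa [hN] using h
  rw [phiCoeff_eq_gradedSeriesCoeff,
    show -(N * (m + m') : ℤ) - ((1 - N) * d - m) = (N - 1) * (d - m) - N * m' by ring,
    gradedSeriesCoeff_apply_of_proj_eq hortho hσ (proj_sub_apply_smul_expCoeff hproj hL ..),
    map_smul, smul_smul, ← zpow_add₀ (Nat.cast_ne_zero.2 hN)]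
  congr 2
  ring

lemma phiCoeff_apply_smul_expCoeff_eq_zero (hproj : ∀ d, π d * π d = π d)
    (hortho : ∀ d e, d ≠ e → π d * π e = 0)
    (hL : ∀ n : ℕ, 1 ≤ n → ∀ (d : ℤ) (v : V), π (d - (n : ℤ)) (L n (π d v)) = L n (π d v))
    {j : ℤ} {m : ℕ}
    (hj : ∀ m' : ℕ, j ≠ -(N * (m + m') : ℤ)) (d : ℤ) (v : V) :
    phiCoeff π L a N (j - ((1 - N) * d - m)) ((N : ℂ) ^ (-d) • expCoeff a L m (π d v)) = 0 := by
  rw [phiCoeff_eq_gradedSeriesCoeff]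
  exact gradedSeriesCoeff_apply_eq_zero hortho (fun m' h => hj m' (by linarith))
    (proj_sub_apply_smul_expCoeff hproj hL ..)

theorem finsum_deltaNCoeff_apply_phiCoeff (hproj : ∀ d, π d * π d = π d)
    (hortho : ∀ d e, d ≠ e → π d * π e = 0)
    (hfin : ∀ v : V, (support fun d => π d v).Finite) (hsum : ∀ v : V, ∑ᶠ d, π d v = v)
    (hL : ∀ n : ℕ, 1 ≤ n → ∀ (d : ℤ) (v : V), π (d - (n : ℤ)) (L n (π d v)) = L n (π d v))
    (hN : N ≠ 0)
    (hnil₁ : ∀ v : V, {p : ℕ × ℤ | (expCoeff (fun n => -a n) L p.1) (π p.2 v) ≠ 0}.Finite)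
    (hnil₂ : ∀ v : V, {p : ℕ × ℤ | (expCoeff a L p.1) (π p.2 v) ≠ 0}.Finite) (j : ℤ) (v : V) :
    ∑ᶠ i, deltaNCoeff π L a N i (phiCoeff π L a N (j - i) v) = if j = 0 then v else 0 := by
  classical
  have hQ : ∀ q ∉ (hnil₁ v).toFinset, expCoeff (fun n => -a n) L q.1 (π q.2 v) = 0 := by simp
  let Δ : ℤ → V →+ V := fun i => AddMonoidHom.mk' (deltaNCoeff π L a N i)
    (by rw [deltaNCoeff_eq_gradedSeriesCoeff]; exact gradedSeriesCoeff_add hnil₂ i)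
  rw [phiCoeff_eq_gradedSeriesCoeff]
  refine (finsum_apply_gradedSeriesCoeff_sub Δ hQ j).trans ?_
  simp only [Δ, AddMonoidHom.mk'_apply]
  rcases lt_or_ge 0 j with hj | hj
  · rw [if_neg hj.ne']
    exact sum_eq_zero fun q _ =>
      deltaNCoeff_apply_smul_expCoeff_neg_eq_zero hproj hortho hL (by omega) _ _
  obtain ⟨M, rfl⟩ : ∃ M : ℕ, j = -M := ⟨j.natAbs, by omega⟩
  rw [if_congr (show -(M : ℤ) = 0 ↔ M = 0 by omega) rfl rfl,
    ← sum_ite_le_apply_proj hfin hsum hQ (sum_range_expCoeff_mul_expCoeff_neg a L M)]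
  refine sum_congr rfl fun ⟨m, d⟩ _ => ?_
  split_ifs with hm
  · obtain ⟨m', rfl⟩ := Nat.exists_eq_add_of_le hm
    rw [Nat.add_sub_cancel_left, Nat.cast_add,
      deltaNCoeff_apply_smul_expCoeff_neg hproj hortho hL hN m m' d v]
  · exact deltaNCoeff_apply_smul_expCoeff_neg_eq_zero hproj hortho hL (by omega) d v

theorem finsum_phiCoeff_apply_deltaNCoeff (hproj : ∀ d, π d * π d = π d)
    (hortho : ∀ d e, d ≠ e → π d * π e = 0)
    (hfin : ∀ v : V, (support fun d => π d v).Finite) (hsum : ∀ v : V, ∑ᶠ d, π d v = v)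
    (hL : ∀ n : ℕ, 1 ≤ n → ∀ (d : ℤ) (v : V), π (d - (n : ℤ)) (L n (π d v)) = L n (π d v))
    (hN : N ≠ 0)
    (hnil₁ : ∀ v : V, {p : ℕ × ℤ | (expCoeff (fun n => -a n) L p.1) (π p.2 v) ≠ 0}.Finite)
    (hnil₂ : ∀ v : V, {p : ℕ × ℤ | (expCoeff a L p.1) (π p.2 v) ≠ 0}.Finite) (j : ℤ) (v : V) :
    ∑ᶠ i, phiCoeff π L a N i (deltaNCoeff π L a N (j - i) v) = if j = 0 then v else 0 := by
  classical
  have hP : ∀ q ∉ (hnil₂ v).toFinset, expCoeff a L q.1 (π q.2 v) = 0 := by simp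
  let Φ : ℤ → V →+ V := fun i => AddMonoidHom.mk' (phiCoeff π L a N i)
    (by rw [phiCoeff_eq_gradedSeriesCoeff]; exact gradedSeriesCoeff_add hnil₁ i)
  rw [deltaNCoeff_eq_gradedSeriesCoeff]
  refine (finsum_apply_gradedSeriesCoeff_sub Φ hP j).trans ?_
  simp only [Φ, AddMonoidHom.mk'_apply]
  by_cases hj : ∃ M : ℕ, j = -(N * M : ℤ)
  swap
  · simp only [not_exists] at hj
    rw [if_neg (by simpa using hj 0)]
    exact sum_eq_zero fun q _ =>
      phiCoeff_apply_smul_expCoeff_eq_zero hproj hortho hL (fun m' => by exact_mod_cast hj _) _ _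
  obtain ⟨M, rfl⟩ := hj
  have hconv := sum_range_expCoeff_mul_expCoeff_neg (fun n => -a n) L M
  simp only [neg_neg] at hconv
  calc _ = (N : ℂ) ^ (-(M : ℤ)) •
        ∑ q ∈ (hnil₂ v).toFinset, (if q.1 ≤ M then
          expCoeff (fun n => -a n) L (M - q.1) (expCoeff a L q.1 (π q.2 v)) else 0) := by
        rw [smul_sum]
        refine sum_congr rfl fun ⟨m, d⟩ _ => ?_
        dsimp only
        split_ifs with hm
        · obtain ⟨m', rfl⟩ := Nat.exists_eq_add_of_le hm
          rw [Nat.add_sub_cancel_left, Nat.cast_add,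
            phiCoeff_apply_smul_expCoeff hproj hortho hL hN m m' d v]
        · rw [smul_zero]
          refine phiCoeff_apply_smul_expCoeff_eq_zero hproj hortho hL (fun m' h => hm ?_) d v
          have := mul_left_cancel₀ (Nat.cast_ne_zero.2 hN) (neg_inj.1 h)
          omega
    _ = if -(N * M : ℤ) = 0 then v else 0 := by
        rw [sum_ite_le_apply_proj hfin hsum hP hconv]
        rcases eq_or_ne M 0 with rfl | hM
        · simp
        · simp [hM, hN]

end InverseFormula

open Function in
/-- Both Cauchy products `Δ_N(x^N)·Φ(x)` and `Φ(x)·Δ_N(x^N)` are the identity: the coefficient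
of `x^j` is `id` for `j = 0` and `0` otherwise. -/
theorem stmt_8 (V : Type*) [AddCommGroup V] [Module ℂ V]
    (π : ℤ → Module.End ℂ V)
    (hproj : ∀ d, π d * π d = π d)
    (hortho : ∀ d e, d ≠ e → π d * π e = 0)
    (hfin : ∀ v : V, (support fun d => π d v).Finite)
    (hsum : ∀ v : V, ∑ᶠ d, π d v = v)
    (L : ℕ → Module.End ℂ V)
    (hL : ∀ n : ℕ, 1 ≤ n → ∀ (d : ℤ) (v : V),
      π (d - (n : ℤ)) (L n (π d v)) = L n (π d v))
    (a : ℕ → ℂ) (N : ℕ) (hN : 0 < N)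
    (hnil₁ : ∀ v : V,
      {p : ℕ × ℤ | (expCoeff (fun n => -a n) L p.1) (π p.2 v) ≠ 0}.Finite)
    (hnil₂ : ∀ v : V, {p : ℕ × ℤ | (expCoeff a L p.1) (π p.2 v) ≠ 0}.Finite)
    (j : ℤ) (v : V) :
    (∑ᶠ i : ℤ, deltaNCoeff π L a N i (phiCoeff π L a N (j - i) v) =
        if j = 0 then v else 0) ∧
    (∑ᶠ i : ℤ, phiCoeff π L a N i (deltaNCoeff π L a N (j - i) v) =
        if j = 0 then v else 0) :=
  ⟨finsum_deltaNCoeff_apply_phiCoeff hproj hortho hfin hsum hL hN.ne' hnil₁ hnil₂ j v,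
    finsum_phiCoeff_apply_deltaNCoeff hproj hortho hfin hsum hL hN.ne' hnil₁ hnil₂ j v⟩
end
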